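/- Let T be a closed range CoR operator on a complex Hilbert space H such that R(T) + R(T*) is closed. Then T(T + T*)† T = T − (1/2) P T P, where P is the orthogonal projection onto R(T) ∩ R(T*). -/

import Mathlib

/-! Write `S = T + T*` and `Q = S X`, the orthogonal projection onto `R(S)`. The CoR condition
forces `ker S ≤ ker T ∩ ker T*`: if `T x = -T* x` then `T x ∈ R(T) ∩ R(T*)`, so
`‖T x‖² = ⟪x, T* T x⟫ = ⟪x, T T x⟫ = -‖T x‖²`. Hence `Q T = T`, i.e. `T X T + T* X T = T`.
The summand `T* X T = T - T X T` has range in `R(T) ∩ R(T*)`, so `P` fixes it, and since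
`P T* = P T` we get `2 T* X T = P T* X T + P T X T = P S X T = P T`. Finally `P T P = P T`,
as `T P = T* P` also has range in `R(T) ∩ R(T*)`. -/

open ContinuousLinearMap
open scoped InnerProductSpace

theorem IsSelfAdjoint.mul_mul_self_eq_self {R : Type*} [Mul R] [StarMul R] {s x : R}
    (hs : IsSelfAdjoint s) (hsx : IsSelfAdjoint (s * x)) (h : s * x * s = s) :
    s * (s * x) = s := by
  simpa only [star_mul, hs.star_eq, hsx.star_eq] using congrArg star h

namespace ContinuousLinearMap

theorem comp_eq_self_of_ker_le {R M M₂ M₃ : Type*} [Ring R]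
    [TopologicalSpace M] [AddCommGroup M] [Module R M]
    [TopologicalSpace M₂] [AddCommGroup M₂] [Module R M₂]
    [TopologicalSpace M₃] [AddCommGroup M₃] [Module R M₃]
    {S : M →L[R] M₂} {Q : M →L[R] M} {A : M →L[R] M₃}
    (hSQ : S ∘L Q = S) (hker : S.ker ≤ A.ker) : A ∘L Q = A := by
  ext z
  have hz : S (z - Q z) = 0 := by
    rw [map_sub, ← comp_apply, hSQ, sub_self]
  have hAz : A (z - Q z) = 0 := hker hz
  rw [map_sub, sub_eq_zero] at hAz
  exact hAz.symm

theorem IsIdempotentElem.comp_eq_self_of_range_le {R M : Type*} [Ring R]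
    [TopologicalSpace M] [AddCommGroup M] [Module R M] {P A : M →L[R] M}
    (hP : IsIdempotentElem P) (hA : A.range ≤ P.range) : P ∘L A = A :=
  coe_inj.mp ((LinearMap.IsIdempotentElem.comp_eq_right_iff hP.toLinearMap _).mpr hA)

end ContinuousLinearMap

variable {H : Type*} [NormedAddCommGroup H] [InnerProductSpace ℂ H] [CompleteSpace H]

def IsCoR (T : H →L[ℂ] H) : Prop :=
  ∀ x ∈ T.range ⊓ (adjoint T).range, T x = adjoint T x

namespace IsCoR

variable {T : H →L[ℂ] H} (hT : IsCoR T)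
include hT

theorem ker_add_adjoint_le_ker : (T + adjoint T).ker ≤ T.ker := by
  intro x hx
  have hT'x : adjoint T x = -T x := eq_neg_of_add_eq_zero_right hx
  have hTx_mem : T x ∈ T.range ⊓ (adjoint T).range :=
    ⟨⟨x, rfl⟩, ⟨-x, by simp [hT'x]⟩⟩
  have hinner : ⟪T x, T x⟫_ℂ = -⟪T x, T x⟫_ℂ := by
    calc ⟪T x, T x⟫_ℂ = ⟪x, adjoint T (T x)⟫_ℂ := (adjoint_inner_right T x (T x)).symm
      _ = ⟪x, T (T x)⟫_ℂ := by rw [hT _ hTx_mem]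
      _ = ⟪adjoint T x, T x⟫_ℂ := (adjoint_inner_left T (T x) x).symm
      _ = -⟪T x, T x⟫_ℂ := by rw [hT'x, inner_neg_left]
  exact inner_self_eq_zero.mp (self_eq_neg.mp hinner)

theorem ker_add_adjoint_le_ker_adjoint : (T + adjoint T).ker ≤ (adjoint T).ker := by
  intro x hx
  have hTx : T x = 0 := hT.ker_add_adjoint_le_ker hx
  simpa [hTx] using (hx : T x + adjoint T x = 0)

theorem add_adjoint_comp_comp_self {X : H →L[ℂ] H}
    (h1 : (T + adjoint T) ∘L X ∘L (T + adjoint T) = T + adjoint T)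
    (h3 : IsSelfAdjoint ((T + adjoint T) ∘L X)) :
    (T + adjoint T) ∘L X ∘L T = T := by
  have hS : IsSelfAdjoint (T + adjoint T) := by
    rw [isSelfAdjoint_iff', map_add, adjoint_adjoint, add_comm]
  have hSQ : (T + adjoint T) ∘L ((T + adjoint T) ∘L X) = T + adjoint T :=
    hS.mul_mul_self_eq_self h3 h1
  have hT'Q : adjoint T ∘L ((T + adjoint T) ∘L X) = adjoint T :=
    comp_eq_self_of_ker_le hSQ hT.ker_add_adjoint_le_ker_adjoint
  simpa only [adjoint_comp, adjoint_adjoint, isSelfAdjoint_iff'.mp h3, comp_assoc]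
    using congrArg adjoint hT'Q

variable {P : H →L[ℂ] H} (hPr : P.range = T.range ⊓ (adjoint T).range)
include hPr

theorem comp_eq_adjoint_comp : T ∘L P = adjoint T ∘L P := by
  ext z
  exact hT _ (hPr ▸ ⟨z, rfl⟩)

theorem proj_comp_adjoint (hP2 : IsSelfAdjoint P) : P ∘L adjoint T = P ∘L T := by
  simpa only [adjoint_comp, adjoint_adjoint, isSelfAdjoint_iff'.mp hP2]
    using congrArg adjoint (hT.comp_eq_adjoint_comp hPr)

theorem proj_comp_comp_proj (hP1 : IsIdempotentElem P) (hP2 : IsSelfAdjoint P) :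
    P ∘L T ∘L P = P ∘L T := by
  have hrange : (T ∘L P).range ≤ P.range := by
    rintro _ ⟨z, rfl⟩
    rw [hPr]
    refine ⟨⟨P z, rfl⟩, ⟨P z, ?_⟩⟩
    exact (DFunLike.congr_fun (hT.comp_eq_adjoint_comp hPr) z).symm
  have hPTP : P ∘L T ∘L P = T ∘L P := hP1.comp_eq_self_of_range_le hrange
  have hPT'P : P ∘L adjoint T ∘L P = P ∘L adjoint T := by
    simpa only [adjoint_comp, isSelfAdjoint_iff'.mp hP2, comp_assoc] using congrArg adjoint hPTP
  rw [← hT.proj_comp_adjoint hPr hP2, ← hPT'P, ← hT.comp_eq_adjoint_comp hPr]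

theorem adjoint_comp_comp_self {X : H →L[ℂ] H} (hP1 : IsIdempotentElem P)
    (hP2 : IsSelfAdjoint P) (h1 : (T + adjoint T) ∘L X ∘L (T + adjoint T) = T + adjoint T)
    (h3 : IsSelfAdjoint ((T + adjoint T) ∘L X)) :
    adjoint T ∘L X ∘L T = (1 / 2 : ℂ) • (P ∘L T) := by
  have hSXT := hT.add_adjoint_comp_comp_self h1 h3
  have hrange : (adjoint T ∘L X ∘L T).range ≤ P.range := by
    rintro _ ⟨x, rfl⟩
    rw [hPr]
    refine ⟨⟨x - X (T x), ?_⟩, ⟨X (T x), rfl⟩⟩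
    have hx := DFunLike.congr_fun hSXT x
    simp only [comp_apply, add_apply] at hx
    change T (x - X (T x)) = adjoint T (X (T x))
    rw [map_sub, sub_eq_iff_eq_add']
    exact hx.symm
  have hdouble : P ∘L T = (2 : ℂ) • (adjoint T ∘L X ∘L T) := by
    calc P ∘L T = P ∘L ((T + adjoint T) ∘L X ∘L T) := by rw [hSXT]
      _ = (P ∘L T) ∘L X ∘L T + P ∘L (adjoint T ∘L X ∘L T) := by
        simp only [add_comp, comp_add, comp_assoc]
      _ = (2 : ℂ) • (P ∘L (adjoint T ∘L X ∘L T)) := by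
        rw [← hT.proj_comp_adjoint hPr hP2, comp_assoc, two_smul]
      _ = (2 : ℂ) • (adjoint T ∘L X ∘L T) := by rw [hP1.comp_eq_self_of_range_le hrange]
  rw [hdouble, smul_smul]
  norm_num

end IsCoR

theorem stmt12_general (T : H →L[ℂ] H)
    (hCoR : ∀ x ∈ LinearMap.range (T : H →ₗ[ℂ] H) ⊓ LinearMap.range (adjoint T : H →ₗ[ℂ] H), T x = adjoint T x)
    (P : H →L[ℂ] H) (hP1 : IsIdempotentElem P) (hP2 : IsSelfAdjoint P)
    (hPr : LinearMap.range (P : H →ₗ[ℂ] H) = LinearMap.range (T : H →ₗ[ℂ] H) ⊓ LinearMap.range (adjoint T : H →ₗ[ℂ] H))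
    (X : H →L[ℂ] H)
    (h1 : (T + adjoint T) ∘L X ∘L (T + adjoint T) = T + adjoint T)
    (h3 : IsSelfAdjoint ((T + adjoint T) ∘L X)) :
    T ∘L X ∘L T = T - (1 / 2 : ℂ) • (P ∘L T ∘L P) := by
  have hT : IsCoR T := hCoR
  rw [hT.proj_comp_comp_proj hPr hP1 hP2, ← hT.adjoint_comp_comp_self hPr hP1 hP2 h1 h3,
    eq_sub_iff_add_eq, ← add_comp, hT.add_adjoint_comp_comp_self h1 h3]

theorem stmt12 (T : H →L[ℂ] H) (hT : IsClosed (LinearMap.range (T : H →ₗ[ℂ] H) : Set H))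
    (hCoR : ∀ x ∈ LinearMap.range (T : H →ₗ[ℂ] H) ⊓ LinearMap.range (adjoint T : H →ₗ[ℂ] H), T x = adjoint T x)
    (hsum : IsClosed ((LinearMap.range (T : H →ₗ[ℂ] H) ⊔ LinearMap.range (adjoint T : H →ₗ[ℂ] H) : Submodule ℂ H) : Set H))
    (P : H →L[ℂ] H) (hP1 : IsIdempotentElem P) (hP2 : IsSelfAdjoint P)
    (hPr : LinearMap.range (P : H →ₗ[ℂ] H) = LinearMap.range (T : H →ₗ[ℂ] H) ⊓ LinearMap.range (adjoint T : H →ₗ[ℂ] H))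
    (X : H →L[ℂ] H)
    (h1 : (T + adjoint T) ∘L X ∘L (T + adjoint T) = T + adjoint T)
    (h2 : X ∘L (T + adjoint T) ∘L X = X)
    (h3 : IsSelfAdjoint ((T + adjoint T) ∘L X))
    (h4 : IsSelfAdjoint (X ∘L (T + adjoint T))) :
    T ∘L X ∘L T = T - (1 / 2 : ℂ) • (P ∘L T ∘L P) :=
  stmt12_general T hCoR P hP1 hP2 hPr X h1 h3
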